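/- For every integer N ≥ 2, the restriction of Q_{1/N}(x²+y²+z²) = S_{2,N}(σ₁⊗σ₁ + σ₂⊗σ₂ + σ₃⊗σ₃) to the symmetric subspace Sym^N(ℂ²) equals the identity operator on Sym^N(ℂ²). -/

import Mathlib

open scoped ComplexConjugate
open MeasureTheory Filter Topology

noncomputable section

/-! ## Setting

`M₂(ℂ)^{⊗N}` is realized as matrices indexed by `Fin N → Fin 2`, acting on
`(ℂ²)^{⊗N} = EuclideanSpace ℂ (Fin N → Fin 2)`. -/

/-- `M₂(ℂ)^{⊗N}`, realized as matrices indexed by `Fin N → Fin 2`. -/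
abbrev TP (N : ℕ) : Type := Matrix (Fin N → Fin 2) (Fin N → Fin 2) ℂ

/-- The Pauli matrices `σ₁, σ₂, σ₃`. -/
def pauli : Fin 3 → Matrix (Fin 2) (Fin 2) ℂ
  | 0 => !![0, 1; 1, 0]
  | 1 => !![0, -Complex.I; Complex.I, 0]
  | 2 => !![1, 0; 0, -1]

/-- The symmetrization operator `S_N` on `M₂(ℂ)^{⊗N}`: the average over all permutations
of the tensor factors. -/
def symmMat (N : ℕ) (A : TP N) : TP N :=
  (N.factorial : ℂ)⁻¹ • ∑ σ : Equiv.Perm (Fin N), Matrix.of fun i j => A (i ∘ σ) (j ∘ σ)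

/-- `b ⊗ I₂^{⊗(N−M)}` (junk value `0` if `M > N`). -/
def embedMat (M N : ℕ) (b : TP M) : TP N :=
  if h : M ≤ N then
    Matrix.of fun i j =>
      b (fun k => i (Fin.castLE h k)) (fun k => j (Fin.castLE h k)) *
        ∏ k ∈ Finset.univ.filter (fun k : Fin N => M ≤ (k : ℕ)),
          (if i k = j k then (1 : ℂ) else 0)
  else 0

/-- `S_{M,N}(b) = S_N(b ⊗ I₂^{⊗(N−M)})`. -/
def SMN (M N : ℕ) (b : TP M) : TP N := symmMat N (embedMat M N b)

/-- The elementary tensor `σ_{m 0} ⊗ ⋯ ⊗ σ_{m (L-1)}` as a matrix on `(ℂ²)^{⊗L}`. -/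
def pauliTensor {L : ℕ} (m : Fin L → Fin 3) : TP L :=
  Matrix.of fun i j => ∏ k, pauli (m k) (i k) (j k)

/-- For a monomial with exponents `d`, the list of its variable indices (first `d 0` copies
of `0`, then `d 1` copies of `1`, then `d 2` copies of `2`). -/
def monFun (d : Fin 3 →₀ ℕ) : Fin (d 0 + d 1 + d 2) → Fin 3 := fun k =>
  if (k : ℕ) < d 0 then 0 else if (k : ℕ) < d 0 + d 1 then 1 else 2

/-- Quantization of the monomial `x^{d 0} y^{d 1} z^{d 2}`:
`S_{L,N}(σ_{j₁} ⊗ ⋯ ⊗ σ_{j_L})` if `L ≤ N`, and `0` if `L > N`. -/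
def Qmon (N : ℕ) (d : Fin 3 →₀ ℕ) : TP N :=
  SMN (d 0 + d 1 + d 2) N (pauliTensor (monFun d))

/-- The quantization map `Q_{1/N}`: the linear extension of `Qmon` to all complex
polynomials in the three real variables `x, y, z`. -/
def Q (N : ℕ) (p : MvPolynomial (Fin 3) ℂ) : TP N :=
  ∑ d ∈ p.support, p.coeff d • Qmon N d

/-- The symmetric subspace `Sym^N(ℂ²) ⊆ (ℂ²)^{⊗N}` (the fixed points of the permutation
action, i.e. the range of the vector symmetrizer). -/
def SymSub (N : ℕ) : Submodule ℂ (EuclideanSpace ℂ (Fin N → Fin 2)) where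
  carrier := {v | ∀ σ : Equiv.Perm (Fin N), ∀ i, v (i ∘ σ) = v i}
  add_mem' := by
    intro a b ha hb σ i
    have : (a + b) (i ∘ σ) = a (i ∘ σ) + b (i ∘ σ) := rfl
    rw [this, ha σ i, hb σ i]; rfl
  zero_mem' := by intro σ i; rfl
  smul_mem' := by
    intro c v hv σ i
    have : (c • v) (i ∘ σ) = c • (v (i ∘ σ)) := rfl
    rw [this, hv σ i]; rfl

/-- The vector symmetrizer. -/
def symVec (N : ℕ) (v : EuclideanSpace ℂ (Fin N → Fin 2)) :
    EuclideanSpace ℂ (Fin N → Fin 2) :=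
  WithLp.toLp 2 (fun i => (N.factorial : ℂ)⁻¹ * ∑ σ : Equiv.Perm (Fin N), v (i ∘ σ))

lemma symVec_mem (N : ℕ) (v : EuclideanSpace ℂ (Fin N → Fin 2)) :
    symVec N v ∈ SymSub N := by
  intro τ i
  show (N.factorial : ℂ)⁻¹ * ∑ σ : Equiv.Perm (Fin N), v ((i ∘ τ) ∘ σ)
      = (N.factorial : ℂ)⁻¹ * ∑ σ : Equiv.Perm (Fin N), v (i ∘ σ)
  congr 1
  exact Fintype.sum_equiv (Equiv.mulLeft τ) _ _ (fun σ => by rfl)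

/-- The vector symmetrizer as a linear map onto the symmetric subspace. -/
def symProj (N : ℕ) : EuclideanSpace ℂ (Fin N → Fin 2) →ₗ[ℂ] SymSub N where
  toFun v := ⟨symVec N v, symVec_mem N v⟩
  map_add' v w := by
    apply Subtype.ext
    apply WithLp.ofLp_injective
    funext i
    show (N.factorial : ℂ)⁻¹ * ∑ σ : Equiv.Perm (Fin N), (v + w) (i ∘ σ) = _
    have h : ∀ σ : Equiv.Perm (Fin N), (v + w) (i ∘ σ) = v (i ∘ σ) + w (i ∘ σ) :=
      fun _ => rfl
    simp only [h, Finset.sum_add_distrib]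
    show _ = (N.factorial : ℂ)⁻¹ * (∑ σ : Equiv.Perm (Fin N), v (i ∘ σ))
        + (N.factorial : ℂ)⁻¹ * (∑ σ : Equiv.Perm (Fin N), w (i ∘ σ))
    ring
  map_smul' c v := by
    apply Subtype.ext
    apply WithLp.ofLp_injective
    funext i
    show (N.factorial : ℂ)⁻¹ * ∑ σ : Equiv.Perm (Fin N), (c • v) (i ∘ σ) = _
    have h : ∀ σ : Equiv.Perm (Fin N), (c • v) (i ∘ σ) = c * v (i ∘ σ) := fun _ => rfl
    simp only [h, ← Finset.mul_sum]
    show _ = c * ((N.factorial : ℂ)⁻¹ * (∑ σ : Equiv.Perm (Fin N), v (i ∘ σ)))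
    ring

/-- The restriction (compression) of a matrix `A` on `(ℂ²)^{⊗N}` to the symmetric subspace
`Sym^N(ℂ²)`, as a continuous linear operator; when `A` leaves `Sym^N(ℂ²)` invariant (as do
all operators considered here) this is exactly the restriction `A|_{Sym^N(ℂ²)}`. -/
def restrSym (N : ℕ) (A : TP N) : SymSub N →L[ℂ] SymSub N :=
  LinearMap.toContinuousLinearMap
    ((symProj N) ∘ₗ (Matrix.toEuclideanLin A) ∘ₗ (SymSub N).subtype)

/-- The unit sphere `S² ⊂ ℝ³`. -/
abbrev S2 : Type := Metric.sphere (0 : EuclideanSpace ℝ (Fin 3)) 1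

/-- Spherical coordinates `(θ, φ) ↦ (sin θ cos φ, sin θ sin φ, cos θ)`. -/
def sphCoord (a : ℝ × ℝ) : EuclideanSpace ℝ (Fin 3) :=
  WithLp.toLp 2 ![Real.sin a.1 * Real.cos a.2, Real.sin a.1 * Real.sin a.2, Real.cos a.1]

lemma sphCoord_mem (a : ℝ × ℝ) :
    sphCoord a ∈ Metric.sphere (0 : EuclideanSpace ℝ (Fin 3)) 1 := by
  have h : ‖sphCoord a‖ = 1 := by
    rw [EuclideanSpace.norm_eq]
    have : ∑ i : Fin 3, sphCoord a i ^ 2 = 1 := by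
      have hs := Real.sin_sq_add_cos_sq a.1
      have hc := Real.sin_sq_add_cos_sq a.2
      simp [sphCoord, Fin.sum_univ_three]
      nlinarith [hs, hc]
    have h2 : ∀ i : Fin 3, ‖sphCoord a i‖ ^ 2 = sphCoord a i ^ 2 := fun i => sq_abs _
    simp only [h2, this]
    exact Real.sqrt_one
  simpa [mem_sphere_iff_norm] using h

/-- The standard surface measure `dΩ` on `S²` (of total mass `4π`), realized as the
push-forward of `sin θ dθ dφ` on `[0,π] × (−π,π]` under spherical coordinates. -/
def μS2 : Measure S2 :=
  Measure.map (fun a : ℝ × ℝ => (⟨sphCoord a, sphCoord_mem a⟩ : S2))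
    (((volume : Measure (ℝ × ℝ)).restrict
        (Set.Icc (0 : ℝ) Real.pi ×ˢ Set.Ioc (-Real.pi) Real.pi)).withDensity
      fun a => ENNReal.ofReal (Real.sin a.1))

/-- The polar angle `θ ∈ [0, π]` of a point of `S²`. -/
def thetaOf (Ω : S2) : ℝ := Real.arccos ((Ω : EuclideanSpace ℝ (Fin 3)) 2)

/-- The azimuthal angle `φ ∈ (−π, π]` of a point of `S²`. -/
def phiOf (Ω : S2) : ℝ :=
  Complex.arg (((Ω : EuclideanSpace ℝ (Fin 3)) 0 : ℂ) +
    ((Ω : EuclideanSpace ℝ (Fin 3)) 1 : ℂ) * Complex.I)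

/-- The coherent spin state `|Ω⟩₁ = cos(θ/2) e₁ + e^{iφ} sin(θ/2) e₂ ∈ ℂ²`. -/
def cs1 (Ω : S2) : Fin 2 → ℂ :=
  ![(Real.cos (thetaOf Ω / 2) : ℂ),
    Complex.exp (Complex.I * (phiOf Ω : ℂ)) * (Real.sin (thetaOf Ω / 2) : ℂ)]

/-- The `N`-fold coherent spin state `|Ω⟩_N = |Ω⟩₁^{⊗N} ∈ (ℂ²)^{⊗N}`. -/
def csN (N : ℕ) (Ω : S2) : EuclideanSpace ℂ (Fin N → Fin 2) :=
  WithLp.toLp 2 (fun i => ∏ k, cs1 Ω (i k))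

/-- The matrix of the weak integral `((N+1)/(4π)) ∫_{S²} f(Ω) |Ω⟩⟨Ω|_N dΩ` on `(ℂ²)^{⊗N}`
(entrywise Bochner integral, which in finite dimension coincides with the weak integral). -/
def Q'mat (N : ℕ) (f : S2 → ℂ) : TP N :=
  Matrix.of fun i j =>
    ((N + 1 : ℂ) / (4 * (Real.pi : ℂ))) * ∫ Ω, f Ω * csN N Ω i * conj (csN N Ω j) ∂μS2

/-- The coherent-state (Berezin) quantization map `Q'_{1/N}`, as an operator on
`Sym^N(ℂ²)` (the range of `|Ω⟩⟨Ω|_N` lies in `Sym^N(ℂ²)`, so the compression coincides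
with the operator defined by the weak integral). -/
def Q' (N : ℕ) (f : S2 → ℂ) : SymSub N →L[ℂ] SymSub N := restrSym N (Q'mat N f)

/-- The restriction of a polynomial (in three real variables) to the unit sphere `S²`. -/
def restrictS2 (p : MvPolynomial (Fin 3) ℂ) : S2 → ℂ :=
  fun Ω => MvPolynomial.eval (fun i => ((Ω : EuclideanSpace ℝ (Fin 3)) i : ℂ)) p

/-- The restriction to `S²` as a linear map. -/
def restrictS2Lin : MvPolynomial (Fin 3) ℂ →ₗ[ℂ] (S2 → ℂ) where
  toFun := restrictS2
  map_add' p q := by funext Ω; simp [restrictS2]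
  map_smul' c p := by funext Ω; simp [restrictS2]

/-- `P_N(S²)`: the space of restrictions to `S²` of complex polynomials of degree `≤ N`
in three real variables. -/
def PNS2 (N : ℕ) : Submodule ℂ (S2 → ℂ) where
  carrier := {g | ∃ p : MvPolynomial (Fin 3) ℂ, p.totalDegree ≤ N ∧ g = restrictS2 p}
  add_mem' := by
    rintro a b ⟨p, hp, rfl⟩ ⟨q, hq, rfl⟩
    exact ⟨p + q, le_trans (MvPolynomial.totalDegree_add p q) (by omega),
      by funext Ω; simp [restrictS2]⟩
  zero_mem' := ⟨0, by simp, by funext Ω; simp [restrictS2]⟩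
  smul_mem' := by
    rintro c a ⟨p, hp, rfl⟩
    exact ⟨c • p, le_trans (MvPolynomial.totalDegree_smul_le c p) hp,
      by funext Ω; simp [restrictS2]⟩

/-- The `N`-fold tensor power `U^{⊗N}` of a `2×2` matrix, on `(ℂ²)^{⊗N}`. -/
def tpow (N : ℕ) (U : Matrix (Fin 2) (Fin 2) ℂ) : TP N :=
  Matrix.of fun i j => ∏ k, U (i k) (j k)

/-- `σ_k(j) = I₂ ⊗ ⋯ ⊗ σ_k ⊗ ⋯ ⊗ I₂` with the Pauli matrix `σ_k` in the `j`-th slot. -/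
def pauliAt (N : ℕ) (k : Fin 3) (j : Fin N) : TP N :=
  Matrix.of fun a b =>
    pauli k (a j) (b j) *
      ∏ t ∈ Finset.univ.filter (fun t : Fin N => t ≠ j), (if a t = b t then (1 : ℂ) else 0)

/-- The quantum Curie–Weiss Hamiltonian
`h^{CW}_{1/N} = (1/N)( −(J/(2N)) Σ_{i,j} σ₃(i)σ₃(j) − B Σ_j σ₁(j))`. -/
def hCW (J B : ℝ) (N : ℕ) : TP N :=
  ((N : ℂ))⁻¹ • ((-(J / (2 * N)) : ℂ) • ∑ i : Fin N, ∑ j : Fin N,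
      pauliAt N 2 i * pauliAt N 2 j
    + (-(B : ℂ)) • ∑ j : Fin N, pauliAt N 0 j)

open scoped Classical in
/-- The action of a (special orthogonal) matrix on the unit sphere `S²`
(junk value if the image does not lie on the sphere). -/
def rotAct (R : Matrix (Fin 3) (Fin 3) ℝ) (Ω : S2) : S2 :=
  if h : (WithLp.toLp 2 (R.mulVec (Ω : EuclideanSpace ℝ (Fin 3))) : EuclideanSpace ℝ (Fin 3)) ∈
      Metric.sphere (0 : EuclideanSpace ℝ (Fin 3)) 1
  then ⟨WithLp.toLp 2 (R.mulVec (Ω : EuclideanSpace ℝ (Fin 3))), h⟩ else Ω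

/-- A polynomial in three variables is harmonic if its Laplacian vanishes. -/
def IsHarmonic (p : MvPolynomial (Fin 3) ℂ) : Prop :=
  ∑ i : Fin 3, MvPolynomial.pderiv i (MvPolynomial.pderiv i p) = 0

/-- The polynomial `x² + y² + z² − 1`. -/
def sphPoly : MvPolynomial (Fin 3) ℂ :=
  MvPolynomial.X 0 ^ 2 + MvPolynomial.X 1 ^ 2 + MvPolynomial.X 2 ^ 2 - 1

/-- The Dicke state `|k, N−k⟩ ∈ Sym^N(ℂ²)`: `binom(N,k)^{-1/2}` times the sum of all
elementary tensors with exactly `k` factors `e₂` (and `N−k` factors `e₁`). -/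
def dicke (N k : ℕ) : EuclideanSpace ℂ (Fin N → Fin 2) :=
  WithLp.toLp 2 (fun i => if (Finset.univ.filter fun t => i t = 1).card = k
    then ((Real.sqrt (N.choose k) : ℂ))⁻¹ else 0)

/-- The operator norm of a matrix acting on `(ℂ²)^{⊗N}` with its Euclidean (ℓ²) norm. -/
def matOpNorm {N : ℕ} (A : TP N) : ℝ :=
  ‖LinearMap.toContinuousLinearMap (Matrix.toEuclideanLin A)‖

/-! On two tensor factors, `σ₁⊗σ₁ + σ₂⊗σ₂ + σ₃⊗σ₃ = 2·SWAP − 1` (a Fierz identity), so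
`S_{2,N}` of it is the symmetrization of `2·P − 1` for the transposition `P` of the first two
factors. Symmetrizing does not change the compression to `Sym^N(ℂ²)`, and every permutation of
the factors fixes `Sym^N(ℂ²)` pointwise, so the compression is `2 − 1 = 1`. -/

lemma Equiv.Perm.viaFintypeEmbedding_one {α β : Type*} [Fintype α] [DecidableEq β] (f : α ↪ β) :
    (1 : Equiv.Perm α).viaFintypeEmbedding f = 1 := by
  ext b
  by_cases hb : b ∈ Set.range f
  · obtain ⟨a, rfl⟩ := hb
    simp [Equiv.Perm.viaFintypeEmbedding_apply_image]
  · simp [Equiv.Perm.viaFintypeEmbedding_apply_notMem_range 1 f hb]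

def slotPerm (N : ℕ) (τ : Equiv.Perm (Fin N)) : Equiv.Perm (Fin N → Fin 2) :=
  Equiv.arrowCongr τ.symm (Equiv.refl (Fin 2))

lemma slotPerm_apply {N : ℕ} (τ : Equiv.Perm (Fin N)) (i : Fin N → Fin 2) :
    slotPerm N τ i = i ∘ τ := rfl

lemma comp_slotPerm_of_mem {N : ℕ} {v : EuclideanSpace ℂ (Fin N → Fin 2)} (hv : v ∈ SymSub N)
    (τ : Equiv.Perm (Fin N)) : v ∘ slotPerm N τ = v :=
  funext (hv τ)

def slotPermMatrix (N : ℕ) (τ : Equiv.Perm (Fin N)) : TP N :=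
  (slotPerm N τ).permMatrix ℂ

lemma slotPermMatrix_apply {N : ℕ} (τ : Equiv.Perm (Fin N)) (i j : Fin N → Fin 2) :
    slotPermMatrix N τ i j = if i ∘ τ = j then 1 else 0 := by
  simp [slotPermMatrix, Equiv.Perm.permMatrix, PEquiv.toMatrix_apply, Equiv.toPEquiv_apply,
    slotPerm_apply]

lemma sum_pauli_mul_pauli (a b c d : Fin 2) :
    ∑ p : Fin 3, pauli p a b * pauli p c d =
      2 * (if c = b ∧ a = d then 1 else 0) - (if a = b ∧ c = d then 1 else 0) := by
  fin_cases a <;> fin_cases b <;> fin_cases c <;> fin_cases d <;>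
    simp [Fin.sum_univ_three, pauli] <;> norm_num

lemma sum_pauliTensor_const_eq_two_smul_swap_sub_one :
    ∑ p : Fin 3, pauliTensor (fun _ : Fin 2 => p) =
      (2 : ℂ) • slotPermMatrix 2 (Equiv.swap 0 1) - 1 := by
  ext u w
  simp [Matrix.sum_apply, pauliTensor, Fin.prod_univ_two, sum_pauli_mul_pauli,
    slotPermMatrix_apply, Matrix.one_apply, funext_iff, Fin.forall_fin_two]

lemma embedMat_apply {M N : ℕ} (h : M ≤ N) (b : TP M) (i j : Fin N → Fin 2) :
    embedMat M N b i j =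
      b (i ∘ Fin.castLE h) (j ∘ Fin.castLE h) *
        ∏ k ∈ Finset.univ.filter (fun k : Fin N => M ≤ (k : ℕ)),
          (if i k = j k then (1 : ℂ) else 0) := by
  rw [embedMat, dif_pos h]; rfl

lemma embedMat_smul (M N : ℕ) (c : ℂ) (b : TP M) :
    embedMat M N (c • b) = c • embedMat M N b := by
  unfold embedMat
  split_ifs
  · ext i j; simp [mul_assoc]
  · simp

lemma embedMat_sub (M N : ℕ) (b b' : TP M) :
    embedMat M N (b - b') = embedMat M N b - embedMat M N b' := by
  unfold embedMat
  split_ifs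
  · ext i j; simp [sub_mul]
  · simp

lemma embedMat_slotPermMatrix {M N : ℕ} (h : M ≤ N) (τ : Equiv.Perm (Fin M)) :
    embedMat M N (slotPermMatrix M τ) =
      slotPermMatrix N (τ.viaFintypeEmbedding (Fin.castLEEmb h)) := by
  set τ' := τ.viaFintypeEmbedding (Fin.castLEEmb h)
  have hτ'_castLE (a : Fin M) : τ' (Fin.castLE h a) = Fin.castLE h (τ a) :=
    τ.viaFintypeEmbedding_apply_image (Fin.castLEEmb h) a
  have hτ'_of_le (k : Fin N) (hk : M ≤ (k : ℕ)) : τ' k = k :=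
    τ.viaFintypeEmbedding_apply_notMem_range (Fin.castLEEmb h)
      (by simpa [Fin.range_castLE] using hk)
  ext i j
  rw [embedMat_apply h, slotPermMatrix_apply, slotPermMatrix_apply, Finset.prod_boole,
    ite_zero_mul_ite_zero, mul_one]
  congr 1
  apply propext
  simp only [Finset.mem_filter, Finset.mem_univ, true_and, funext_iff, Function.comp_apply]
  constructor
  · rintro ⟨hlow, hhigh⟩ k
    by_cases hk : (k : ℕ) < M
    · obtain ⟨a, rfl⟩ : k ∈ Set.range (Fin.castLE h) := by rwa [Fin.range_castLE]
      rw [hτ'_castLE, hlow]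
    · rw [hτ'_of_le k (by omega), hhigh k (by omega)]
  · intro hij
    exact ⟨fun a => by rw [← hτ'_castLE, hij], fun k hk => by rw [← hij, hτ'_of_le k hk]⟩

lemma slotPermMatrix_one (N : ℕ) : slotPermMatrix N 1 = 1 := by
  ext i j
  simp [slotPermMatrix_apply, Matrix.one_apply]

lemma embedMat_one {M N : ℕ} (h : M ≤ N) : embedMat M N 1 = 1 := by
  rw [← slotPermMatrix_one, embedMat_slotPermMatrix h, Equiv.Perm.viaFintypeEmbedding_one,
    slotPermMatrix_one]

lemma symVec_eq_self_of_mem {N : ℕ} {v : EuclideanSpace ℂ (Fin N → Fin 2)} (hv : v ∈ SymSub N) :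
    symVec N v = v := by
  apply WithLp.ofLp_injective
  ext i
  simp [symVec, hv _ i, Fintype.card_perm, Nat.factorial_ne_zero]

lemma toEuclideanLin_symmMat_of_mem {N : ℕ} (B : TP N) {v : EuclideanSpace ℂ (Fin N → Fin 2)}
    (hv : v ∈ SymSub N) :
    Matrix.toEuclideanLin (symmMat N B) v = symVec N (Matrix.toEuclideanLin B v) := by
  have hsub (σ : Equiv.Perm (Fin N)) : (Matrix.of fun i j => B (i ∘ σ) (j ∘ σ)) =
      B.submatrix (slotPerm N σ) (slotPerm N σ) := rfl
  have hfix (σ : Equiv.Perm (Fin N)) : v ∘ (slotPerm N σ).symm = v :=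
    (Equiv.comp_symm_eq _ _ _).mpr (comp_slotPerm_of_mem hv σ).symm
  apply WithLp.ofLp_injective
  ext i
  simp [Matrix.toLpLin_apply, symmMat, symVec, hsub, Matrix.submatrix_mulVec_equiv, hfix,
    slotPerm_apply]

lemma restrSym_sub {N : ℕ} (A B : TP N) : restrSym N (A - B) = restrSym N A - restrSym N B := by
  simp [restrSym, LinearMap.sub_comp, LinearMap.comp_sub]

lemma restrSym_smul {N : ℕ} (c : ℂ) (A : TP N) : restrSym N (c • A) = c • restrSym N A := by
  simp [restrSym, LinearMap.smul_comp, LinearMap.comp_smul]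

lemma restrSym_symmMat {N : ℕ} (B : TP N) : restrSym N (symmMat N B) = restrSym N B := by
  ext ⟨v, hv⟩ : 1
  apply Subtype.ext
  change symVec N (Matrix.toEuclideanLin (symmMat N B) v) = symVec N (Matrix.toEuclideanLin B v)
  rw [toEuclideanLin_symmMat_of_mem B hv, symVec_eq_self_of_mem (symVec_mem N _)]

lemma restrSym_slotPermMatrix {N : ℕ} (τ : Equiv.Perm (Fin N)) :
    restrSym N (slotPermMatrix N τ) = ContinuousLinearMap.id ℂ (SymSub N) := by
  ext ⟨v, hv⟩ : 1
  apply Subtype.ext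
  change symVec N (Matrix.toEuclideanLin (slotPermMatrix N τ) v) = v
  rw [Matrix.toLpLin_apply, slotPermMatrix, Matrix.permMatrix_mulVec,
    comp_slotPerm_of_mem hv, WithLp.toLp_ofLp, symVec_eq_self_of_mem hv]

lemma restrSym_one (N : ℕ) : restrSym N 1 = ContinuousLinearMap.id ℂ (SymSub N) := by
  rw [← slotPermMatrix_one, restrSym_slotPermMatrix]

/-- for `N ≥ 2`, `Q_{1/N}(x²+y²+z²) = S_{2,N}(σ₁⊗σ₁ + σ₂⊗σ₂ + σ₃⊗σ₃)`
restricted to `Sym^N(ℂ²)` is the identity. -/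
theorem SMN_pauli_squares_restrict_eq_id (N : ℕ) (hN : 2 ≤ N) :
    restrSym N (SMN 2 N (∑ i : Fin 3, pauliTensor fun _ : Fin 2 => i)) =
      ContinuousLinearMap.id ℂ (SymSub N) := by
  rw [SMN, restrSym_symmMat, sum_pauliTensor_const_eq_two_smul_swap_sub_one, embedMat_sub,
    embedMat_smul, embedMat_slotPermMatrix hN, embedMat_one hN, restrSym_sub, restrSym_smul,
    restrSym_slotPermMatrix, restrSym_one]
  module

end
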